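/- arXiv:2403.01491 — 9 statements merged into one kernel-verified Lean document; each statement's English description precedes it below -/
import Mathlib

section
/- Let F be a field, let A be an r×n matrix over F of rank r and let H be an (n−r)×n matrix over F of rank n−r with A·Hᵀ = 0 (so A is a generator matrix and H a check matrix of an [n,r] linear code). Then there exists an (n−r)×n matrix B over F such that the n×n matrix G obtained by stacking A on top of B is invertible and, writing G⁻¹ = (C | D) with C of size n×r and D of size n×(n−r), one has A·D = 0, D has rank n−r, and the column space of D equals the column space of Hᵀ. Hence every linear block code over a field is equivalent to a unit-derived code. -/
/-!
The rows of `A` are independent, so completing them by a basis `B` of a complement of the row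
space gives an invertible `G = [A; B]`. The block `A * D` of `G * G⁻¹ = 1` vanishes, and
`G⁻¹ * G = 1` writes every `x` with `A x = 0` as `x = C (A x) + D (B x) = D (B x)`; hence the
column space of `D` is `ker A`. Since `A * Hᵀ = 0` and `rank Hᵀ = n - r = dim ker A`, the column
space of `Hᵀ` is `ker A` as well.
-/

open Matrix Module Submodule

namespace Matrix

variable {R F : Type*} [Field F] {ι κ m : Type*}

theorem mul_toCols₂_eq_zero_of_fromRows_mul_eq_one [Semiring R] [Fintype m]
    [DecidableEq ι] [DecidableEq κ] {A : Matrix ι m R} {B : Matrix κ m R}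
    {V : Matrix m (ι ⊕ κ) R} (h : fromRows A B * V = 1) : A * V.toCols₂ = 0 := by
  rw [← fromCols_toCols V, fromRows_mul_fromCols, ← fromBlocks_one] at h
  exact (fromBlocks_inj.mp h).2.1

theorem range_mulVecLin_toCols₂_eq_ker [CommSemiring R] [Fintype ι] [Fintype κ] [Fintype m]
    [DecidableEq m] {A : Matrix ι m R} {B : Matrix κ m R} {V : Matrix m (ι ⊕ κ) R}
    (hVG : V * fromRows A B = 1) (hAD : A * V.toCols₂ = 0) :
    LinearMap.range V.toCols₂.mulVecLin = LinearMap.ker A.mulVecLin := by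
  refine le_antisymm (LinearMap.range_le_ker_iff.mpr ?_) fun x hx => ⟨B *ᵥ x, ?_⟩
  · rw [← mulVecLin_mul, hAD, mulVecLin_zero]
  have hx : A *ᵥ x = 0 := hx
  calc V.toCols₂ *ᵥ (B *ᵥ x) = V *ᵥ (fromRows A B *ᵥ x) := by
        conv_rhs => rw [fromRows_mulVec, hx, ← fromCols_toCols V]
        rw [fromCols_mulVec_sumElim, mulVec_zero, zero_add]
    _ = x := by rw [mulVec_mulVec, hVG, one_mulVec]

theorem finrank_ker_mulVecLin [Fintype m] (A : Matrix ι m F) :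
    finrank F (LinearMap.ker A.mulVecLin) = Fintype.card m - A.rank := by
  have h := A.mulVecLin.finrank_range_add_finrank_ker
  rw [Module.finrank_fintype_fun_eq_card] at h
  change A.rank + _ = _ at h
  omega

theorem range_mulVecLin_eq_ker_of_mul_eq_zero [Fintype m] [Fintype κ] {A : Matrix ι m F}
    {M : Matrix m κ F} (hAM : A * M = 0) (hrank : A.rank + M.rank = Fintype.card m) :
    LinearMap.range M.mulVecLin = LinearMap.ker A.mulVecLin := by
  refine eq_of_le_of_finrank_eq (LinearMap.range_le_ker_iff.mpr ?_) ?_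
  · rw [← mulVecLin_mul, hAM, mulVecLin_zero]
  · rw [finrank_ker_mulVecLin, ← hrank, Nat.add_sub_cancel_left]
    rfl

theorem linearIndependent_row_of_rank_eq_card [Fintype ι] [Fintype m] {A : Matrix ι m F}
    (hA : A.rank = Fintype.card ι) : LinearIndependent F A.row := by
  rw [linearIndependent_iff_card_eq_finrank_span, Set.finrank, ← rank_eq_finrank_span_row, hA]

theorem exists_mul_eq_one_of_linearIndependent_row [Fintype ι] [Fintype m]
    [DecidableEq ι] [DecidableEq m] {G : Matrix ι m F} (hG : LinearIndependent F G.row)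
    (hcard : Fintype.card ι = Fintype.card m) :
    ∃ V : Matrix m ι F, G * V = 1 ∧ V * G = 1 := by
  let b : Basis ι F (m → F) :=
    basisOfLinearIndependentOfCardEqFinrank' G.row hG (by simpa using hcard)
  -- the coordinates of the standard basis in the basis `b` of rows of `G` invert `G`
  have hGt : (Pi.basisFun F m).toMatrix b = Gᵀ := by
    ext i j; simp [b, Basis.toMatrix_apply]
  refine ⟨(b.toMatrix (Pi.basisFun F m))ᵀ, ?_, ?_⟩ <;>
    rw [← transpose_transpose G, ← transpose_mul, ← hGt, Basis.toMatrix_mul_toMatrix_flip,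
      transpose_one]

end Matrix

theorem LinearIndependent.exists_linearIndependent_sumElim {F V ι κ : Type*} [Field F]
    [AddCommGroup V] [Module F V] [FiniteDimensional F V] [Fintype ι] [Fintype κ]
    {v : ι → V} (hv : LinearIndependent F v)
    (hcard : Fintype.card ι + Fintype.card κ = finrank F V) :
    ∃ w : κ → V, LinearIndependent F (Sum.elim v w) := by
  obtain ⟨W, hW⟩ := (span F (Set.range v)).exists_isCompl
  have hWrank : finrank F W = Fintype.card κ := by
    have := finrank_add_eq_of_isCompl hW
    rw [finrank_span_eq_card hv] at this
    omega
  let b : Basis κ F W := (finBasisOfFinrankEq F W hWrank).reindex (Fintype.equivFin κ).symm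
  refine ⟨W.subtype ∘ b, hv.sum_type (b.linearIndependent.map' W.subtype W.ker_subtype) ?_⟩
  rw [Set.range_comp, span_image, b.span_eq, Submodule.map_top, range_subtype]
  exact hW.disjoint

theorem Matrix.exists_fromRows_mul_eq_one {F ι κ m : Type*} [Field F] [Fintype ι] [Fintype κ]
    [Fintype m] [DecidableEq ι] [DecidableEq κ] [DecidableEq m]
    {A : Matrix ι m F} (hA : A.rank = Fintype.card ι)
    (hcard : Fintype.card ι + Fintype.card κ = Fintype.card m) :
    ∃ (B : Matrix κ m F) (V : Matrix m (ι ⊕ κ) F),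
      fromRows A B * V = 1 ∧ V * fromRows A B = 1 := by
  obtain ⟨w, hw⟩ := (linearIndependent_row_of_rank_eq_card hA).exists_linearIndependent_sumElim
    (κ := κ) (by simpa using hcard)
  exact ⟨of w, exists_mul_eq_one_of_linearIndependent_row hw (by simpa using hcard)⟩

/-- Every linear block code over a field is equivalent to a unit-derived code:
given a generator matrix `A` of rank `r` and a check matrix `H` of rank `n - r`
with `A * Hᵀ = 0`, there is a matrix `B` completing `A` to an invertible matrix
`G = [A; B]` whose inverse `(C | D)` satisfies `A * D = 0`, `D` has rank `n - r`,
and the column space of `D` equals the column space of `Hᵀ`. -/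
theorem stmt_0 {F : Type*} [Field F] {n r : ℕ} (hr : r ≤ n)
    (A : Matrix (Fin r) (Fin n) F) (H : Matrix (Fin (n - r)) (Fin n) F)
    (hArank : A.rank = r) (hHrank : H.rank = n - r) (hAH : A * H.transpose = 0) :
    ∃ (B : Matrix (Fin (n - r)) (Fin n) F) (V : Matrix (Fin n) (Fin r ⊕ Fin (n - r)) F),
      Matrix.fromRows A B * V = 1 ∧ V * Matrix.fromRows A B = 1 ∧
      A * V.toCols₂ = 0 ∧ (V.toCols₂).rank = n - r ∧
      LinearMap.range (V.toCols₂).mulVecLin =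
        LinearMap.range (H.transpose).mulVecLin := by
  obtain ⟨B, V, hGV, hVG⟩ := exists_fromRows_mul_eq_one (A := A) (κ := Fin (n - r))
    (by simpa using hArank) (by simp only [Fintype.card_fin]; omega)
  have hAD := mul_toCols₂_eq_zero_of_fromRows_mul_eq_one hGV
  have hD := range_mulVecLin_toCols₂_eq_ker hVG hAD
  have hHt : LinearMap.range Hᵀ.mulVecLin = LinearMap.ker A.mulVecLin :=
    range_mulVecLin_eq_ker_of_mul_eq_zero hAH
      (by simp only [rank_transpose, hArank, hHrank, Fintype.card_fin]; omega)
  refine ⟨B, V, hGV, hVG, hAD, ?_, hD.trans hHt.symm⟩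
  rw [rank, hD, finrank_ker_mulVecLin, hArank, Fintype.card_fin]
end

section
/- Let U be an n×n orthogonal matrix over a field F, i.e. U·Uᵀ = Iₙ. Write U = [A;B] where A consists of (any) r rows of U and B of the remaining n−r rows. Then A·Bᵀ = 0, the code C generated by A has dual code C⊥ equal to the code generated by B, and C is an LCD code: C ∩ C⊥ = 0. -/
/-- dot with fixed left vector vanishes on a span. -/
lemma dot_zero_of_mem_span {F : Type*} [Field F] {n m : ℕ}
    (w : Fin n → F) (M : Matrix (Fin m) (Fin n) F)
    (h : ∀ j, ∑ k, w k * M j k = 0) {v : Fin n → F}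
    (hv : v ∈ Submodule.span F (Set.range M)) : ∑ k, w k * v k = 0 := by
  let φ : (Fin n → F) →ₗ[F] F :=
    { toFun := fun u => ∑ k, w k * u k
      map_add' := by intro a b; simp [mul_add, Finset.sum_add_distrib]
      map_smul' := by intro c a; simp [Finset.mul_sum, mul_left_comm] }
  have hle : Submodule.span F (Set.range M) ≤ LinearMap.ker φ := by
    rw [Submodule.span_le]
    rintro _ ⟨j, rfl⟩
    exact h j
  exact hle hv

lemma expand_aux {F : Type*} [Field F] {n : ℕ}
    (U : Matrix (Fin n) (Fin n) F) (hU : U * U.transpose = 1) (v : Fin n → F) (k : Fin n) :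
    v k = ∑ j, (∑ l, v l * U j l) * U j k := by
  have hUtU : U.transpose * U = 1 := mul_eq_one_comm.mp hU
  have h1 : Matrix.vecMul (Matrix.vecMul v U.transpose) U = v := by
    rw [Matrix.vecMul_vecMul, hUtU, Matrix.vecMul_one]
  have := congrFun h1 k
  simp only [Matrix.vecMul, dotProduct, Matrix.transpose_apply] at this
  exact this.symm

/-- The dual code of a code `C ⊆ F^ι`, with respect to the standard bilinear
form `⟨u, v⟩ = ∑ i, u i * v i`. -/
def dualCode {F : Type*} [Field F] {ι : Type*} [Fintype ι]
    (C : Submodule F (ι → F)) : Submodule F (ι → F) where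
  carrier := {v | ∀ u ∈ C, ∑ i, u i * v i = 0}
  add_mem' := by
    intro a b ha hb u hu
    simp only [Set.mem_setOf_eq] at *
    simp [Pi.add_apply, mul_add, Finset.sum_add_distrib, ha u hu, hb u hu]
  zero_mem' := by
    intro u hu
    simp
  smul_mem' := by
    intro c a ha u hu
    simp only [Set.mem_setOf_eq] at *
    simp only [Pi.smul_apply, smul_eq_mul, mul_left_comm, ← Finset.mul_sum, ha u hu, mul_zero]

/-- If `U` is an orthogonal `n × n` matrix split (via any selection `f` of rows)
into an `r × n` block `A` and an `(n-r) × n` block `B` of the remaining rows, then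
`A * Bᵀ = 0`, the dual of the code generated by `A` is the code generated by `B`,
and the code generated by `A` is LCD. -/
theorem stmt_1 {F : Type*} [Field F] {n r : ℕ}
    (U : Matrix (Fin n) (Fin n) F) (hU : U * U.transpose = 1)
    (f : Fin r ⊕ Fin (n - r) ≃ Fin n)
    (A : Matrix (Fin r) (Fin n) F) (B : Matrix (Fin (n - r)) (Fin n) F)
    (hA : ∀ i, A i = U (f (Sum.inl i))) (hB : ∀ i, B i = U (f (Sum.inr i))) :
    A * B.transpose = 0 ∧
    dualCode (Submodule.span F (Set.range A)) = Submodule.span F (Set.range B) ∧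
    Submodule.span F (Set.range A) ⊓ dualCode (Submodule.span F (Set.range A)) = ⊥ := by
  have hrow : ∀ i j, (∑ k, U i k * U j k) = if i = j then (1:F) else 0 := by
    intro i j
    have := congrFun (congrFun hU i) j
    simpa [Matrix.mul_apply, Matrix.transpose_apply, Matrix.one_apply] using this
  have hAB : A * B.transpose = 0 := by
    ext i j
    have hne : f (Sum.inl i) ≠ f (Sum.inr j) := by
      simp [f.injective.ne_iff]
    simp [Matrix.mul_apply, Matrix.transpose_apply, hA, hB, hrow, hne]
  have hABe : ∀ i j, (∑ k, A i k * B j k) = 0 := by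
    intro i j
    have := congrFun (congrFun hAB i) j
    simpa [Matrix.mul_apply, Matrix.transpose_apply] using this
  -- membership in the dual code
  have hdual_iff : ∀ v : Fin n → F,
      v ∈ dualCode (Submodule.span F (Set.range A)) ↔ ∀ i, ∑ k, A i k * v k = 0 := by
    intro v
    constructor
    · intro h i
      exact h (A i) (Submodule.subset_span ⟨i, rfl⟩)
    · intro h u hu
      have : ∑ k, v k * u k = 0 := by
        refine dot_zero_of_mem_span v A (fun j => ?_) hu
        rw [← h j]
        exact Finset.sum_congr rfl (fun k _ => mul_comm _ _)
      rw [← this]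
      exact Finset.sum_congr rfl (fun k _ => mul_comm _ _)
  have hdual : dualCode (Submodule.span F (Set.range A)) = Submodule.span F (Set.range B) := by
    ext v
    rw [hdual_iff]
    constructor
    · intro h
      have hv : v = ∑ i : Fin (n - r), (∑ l, v l * B i l) • B i := by
        funext k
        rw [expand_aux U hU v k]
        rw [← Equiv.sum_comp f (fun j => (∑ l, v l * U j l) * U j k)]
        rw [Fintype.sum_sum_type]
        have h1 : ∀ i : Fin r, (∑ l, v l * U (f (Sum.inl i)) l) * U (f (Sum.inl i)) k = 0 := by
          intro i
          have : (∑ l, v l * U (f (Sum.inl i)) l) = 0 := by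
            rw [← h i]
            exact Finset.sum_congr rfl (fun l _ => by rw [hA, mul_comm])
          rw [this, zero_mul]
        simp only [h1, Finset.sum_const_zero, zero_add]
        simp only [Finset.sum_apply, Pi.smul_apply, smul_eq_mul, hB]
      rw [hv]
      exact Submodule.sum_mem _ (fun i _ =>
        Submodule.smul_mem _ _ (Submodule.subset_span ⟨i, rfl⟩))
    · intro hv i
      exact dot_zero_of_mem_span (A i) B (fun j => hABe i j) hv
  refine ⟨hAB, hdual, ?_⟩
  rw [hdual]
  rw [eq_bot_iff]
  rintro v ⟨hvA, hvB⟩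
  have hc : ∀ j : Fin n, (∑ l, v l * U j l) = 0 := by
    intro j
    obtain ⟨s, rfl⟩ := f.surjective j
    cases s with
    | inl i =>
      have := dot_zero_of_mem_span (A i) B (fun j => hABe i j) hvB
      rw [← this]
      exact Finset.sum_congr rfl (fun l _ => by rw [hA, mul_comm])
    | inr i =>
      have := dot_zero_of_mem_span (B i) A
        (fun j => by rw [← hABe j i]; exact Finset.sum_congr rfl (fun k _ => mul_comm _ _)) hvA
      rw [← this]
      exact Finset.sum_congr rfl (fun l _ => by rw [hB, mul_comm])
  have : v = 0 := by
    funext k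
    rw [expand_aux U hU v k]
    simp [hc]
  simp [this]
end

section
/- Let X be an n×n matrix over a field F with X·Xᵀ = α·Iₙ for some α ≠ 0 in F. Write X = [A;B] where A is the matrix of the first r rows and B of the remaining n−r rows. Then the code C generated by A is an [n,r] LCD code (C ∩ C⊥ = 0) and the code generated by B equals the dual code C⊥. -/
/-!
The relation `X * Xᵀ = α • 1` with `α ≠ 0` says that the rows of `X` form an orthogonal basis
of `F^n` in which every row pairs with itself to `α`, so every vector expands as
`v = ∑ k, α⁻¹ ⟨X k, v⟩ • X k`. A vector orthogonal to the first `r` rows therefore lies in the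
span of the last `n - r` rows, and these are orthogonal to the first `r`. The two spans meet
trivially because the rows are linearly independent.
-/

open Matrix Submodule

theorem mem_dualCode_span_iff {F : Type*} [Field F] {ι : Type*} [Fintype ι]
    {s : Set (ι → F)} {v : ι → F} :
    v ∈ dualCode (span F s) ↔ ∀ u ∈ s, u ⬝ᵥ v = 0 :=
  ⟨fun hv u hu => hv u (subset_span hu), fun hv _ hu =>
    (span_le (p := LinearMap.ker ((dotProductBilin F F).flip v))).mpr (fun u hu => hv u hu) hu⟩

theorem range_rows_eq_image_of_apply_eq {R ι κ μ : Type*} {X : Matrix ι μ R}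
    {A : Matrix κ μ R} (f : κ → ι) (hA : ∀ i j, A i j = X (f i) j) :
    Set.range A = X '' Set.range f := by
  ext v
  constructor
  · rintro ⟨i, rfl⟩
    exact ⟨_, ⟨i, rfl⟩, (funext (hA i)).symm⟩
  · rintro ⟨_, ⟨i, rfl⟩, rfl⟩
    exact ⟨i, funext (hA i)⟩

section OrthogonalRows

variable {F : Type*} [Field F] {ι : Type*} [Fintype ι] [DecidableEq ι]
  {X : Matrix ι ι F} {α : F}

theorem dotProduct_rows_of_mul_transpose_eq (hX : X * Xᵀ = α • 1) (i j : ι) :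
    X i ⬝ᵥ X j = if i = j then α else 0 := by
  simpa [mul_apply', one_apply] using congrFun (congrFun hX i) j

theorem mul_inv_smul_transpose_eq_one (hX : X * Xᵀ = α • 1) (hα : α ≠ 0) :
    X * (α⁻¹ • Xᵀ) = 1 := by
  rw [mul_smul_comm, hX, smul_smul, inv_mul_cancel₀ hα, one_smul]

theorem transpose_mul_eq_of_mul_transpose_eq (hX : X * Xᵀ = α • 1) (hα : α ≠ 0) :
    Xᵀ * X = α • 1 := by
  have := mul_eq_one_comm.mp (mul_inv_smul_transpose_eq_one hX hα)
  rwa [smul_mul_assoc, inv_smul_eq_iff₀ hα] at this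

theorem eq_sum_dotProduct_smul_rows (hX : X * Xᵀ = α • 1) (hα : α ≠ 0) (v : ι → F) :
    v = ∑ k, (α⁻¹ * (X k ⬝ᵥ v)) • X k := by
  have hv : α • v = (X *ᵥ v) ᵥ* X := by
    rw [← mulVec_transpose, mulVec_mulVec, transpose_mul_eq_of_mul_transpose_eq hX hα,
      smul_mulVec, one_mulVec]
  simp_rw [mul_smul, ← Finset.smul_sum]
  rw [eq_inv_smul_iff₀ hα, hv, vecMul_eq_sum]
  rfl

theorem linearIndependent_rows_of_mul_transpose_eq (hX : X * Xᵀ = α • 1) (hα : α ≠ 0) :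
    LinearIndependent F X :=
  linearIndependent_rows_iff_isUnit.mpr <| (isUnit_iff_isUnit_det X).mpr <|
    isUnit_det_of_right_inverse (mul_inv_smul_transpose_eq_one hX hα)

theorem dualCode_span_image_rows (hX : X * Xᵀ = α • 1) (hα : α ≠ 0) (s : Set ι) :
    dualCode (span F (X '' s)) = span F (X '' sᶜ) := by
  apply le_antisymm
  · intro v hv
    rw [mem_dualCode_span_iff] at hv
    rw [eq_sum_dotProduct_smul_rows hX hα v]
    refine sum_mem fun k _ => ?_
    by_cases hk : k ∈ s
    · simp [hv _ (Set.mem_image_of_mem X hk)]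
    · exact smul_mem _ _ (subset_span (Set.mem_image_of_mem X hk))
  · rw [span_le]
    rintro _ ⟨j, hj, rfl⟩
    rw [SetLike.mem_coe, mem_dualCode_span_iff]
    rintro _ ⟨i, hi, rfl⟩
    rw [dotProduct_rows_of_mul_transpose_eq hX, if_neg (by rintro rfl; exact hj hi)]

end OrthogonalRows

theorem Fin.range_add_eq_compl_range_castLE {n r : ℕ} (hr : r ≤ n) :
    Set.range (fun i : Fin (n - r) => (⟨r + i, by omega⟩ : Fin n)) =
      (Set.range (Fin.castLE hr))ᶜ := by
  ext k
  simp only [Set.mem_range, Fin.range_castLE, Set.mem_compl_iff, Set.mem_ofPred_eq, not_lt,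
    Fin.ext_iff]
  exact ⟨fun ⟨i, hi⟩ => by omega, fun hk => ⟨⟨k - r, by omega⟩, by simp only; omega⟩⟩

/-- If `X * Xᵀ = α • I` with `α ≠ 0` and `X = [A; B]` with `A` the first `r` rows
and `B` the remaining `n - r` rows, then the code generated by `A` is an
`[n, r]` LCD code and the code generated by `B` is its dual. -/
theorem stmt_2 {F : Type*} [Field F] {n r : ℕ} (hr : r ≤ n)
    (X : Matrix (Fin n) (Fin n) F) (α : F) (hα : α ≠ 0)
    (hX : X * X.transpose = α • 1)
    (A : Matrix (Fin r) (Fin n) F) (B : Matrix (Fin (n - r)) (Fin n) F)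
    (hA : ∀ (i : Fin r) (j : Fin n), A i j = X (Fin.castLE hr i) j)
    (hB : ∀ (i : Fin (n - r)) (j : Fin n),
      B i j = X ⟨r + (i : ℕ), by have := i.isLt; omega⟩ j) :
    Module.finrank F (Submodule.span F (Set.range A)) = r ∧
    Submodule.span F (Set.range A) ⊓ dualCode (Submodule.span F (Set.range A)) = ⊥ ∧
    dualCode (Submodule.span F (Set.range A)) = Submodule.span F (Set.range B) := by
  have hrows := linearIndependent_rows_of_mul_transpose_eq hX hα
  have hrowsA : LinearIndependent F A := by
    have hA' : A = fun i => X (Fin.castLE hr i) := funext fun i => funext (hA i)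
    exact hA' ▸ hrows.comp _ (Fin.castLE_injective hr)
  have hrangeA := range_rows_eq_image_of_apply_eq _ hA
  have hrangeB : Set.range B = X '' (Set.range (Fin.castLE hr))ᶜ := by
    rw [← Fin.range_add_eq_compl_range_castLE hr]
    exact range_rows_eq_image_of_apply_eq _ hB
  have hdual : dualCode (span F (Set.range A)) = span F (Set.range B) := by
    rw [hrangeA, hrangeB, dualCode_span_image_rows hX hα]
  refine ⟨?_, ?_, hdual⟩
  · rw [finrank_span_eq_card hrowsA, Fintype.card_fin]
  · rw [hdual, hrangeA, hrangeB, ← disjoint_iff]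
    exact hrows.disjoint_span_image disjoint_compl_right
end

section
/- Let F be a field containing a primitive n-th root of unity ω, let F_n be the Fourier matrix with rows e_0, …, e_{n−1}, and let 1 ≤ r ≤ n. Then the code generated by the r×n matrix A whose rows are e_0, e_1, …, e_{r−1} is an [n, r, n−r+1] MDS code: it has dimension r and its minimum distance equals n − r + 1. -/
/-!
The `i`-th Fourier row is the vector of values of `X ^ i` at the `n` distinct nodes `ω ^ k`, so the
code is the Reed–Solomon code of polynomials of degree `< r` evaluated at these nodes. A nonzero
polynomial of degree `< r` has at most `r - 1` roots among the nodes: hence evaluation is injective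
(dimension `r`) and every nonzero codeword has weight at least `n - r + 1`. The nodal polynomial of
any `r - 1` nodes attains this bound.
-/

open Polynomial Finset

theorem hammingNorm_eq_card_sub_card_zeros {ι β : Type*} [Fintype ι] [Zero β] [DecidableEq β]
    (c : ι → β) : hammingNorm c = Fintype.card ι - #{k | c k = 0} := by
  rw [hammingNorm, ← card_univ, ← card_filter_add_card_filter_not (s := univ) fun k => c k = 0]
  simp only [ne_eq, add_tsub_cancel_left]

section ReedSolomon

variable {F ι : Type*} [Field F]

noncomputable def evalAt (x : ι → F) : F[X] →ₗ[F] ι → F :=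
  LinearMap.pi fun k => leval (x k)

@[simp]
theorem evalAt_apply (x : ι → F) (p : F[X]) (k : ι) : evalAt x p k = p.eval (x k) := rfl

noncomputable def reedSolomonCode (x : ι → F) (r : ℕ) : Submodule F (ι → F) :=
  (degreeLT F r).map (evalAt x)

theorem span_range_pow_eq_reedSolomonCode (x : ι → F) {r : ℕ} (A : Fin r → ι → F)
    (hA : ∀ i k, A i k = x k ^ (i : ℕ)) :
    Submodule.span F (Set.range A) = reedSolomonCode x r := by
  classical
  have hrows : A = fun i : Fin r => evalAt x (X ^ (i : ℕ)) := by
    ext i k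
    simp [hA]
  rw [reedSolomonCode, degreeLT_eq_span_X_pow, Submodule.map_span, hrows]
  congr 1
  ext c
  simp [Fin.exists_iff]

variable [Fintype ι] {x : ι → F} {r : ℕ}

theorem injective_evalAt_domRestrict_degreeLT (hx : Function.Injective x)
    (hr : r ≤ Fintype.card ι) : Function.Injective ((evalAt x).domRestrict (degreeLT F r)) := by
  refine (injective_iff_map_eq_zero _).mpr fun ⟨p, hp⟩ hp0 => ?_
  rw [Submodule.mk_eq_zero]
  refine eq_zero_of_degree_lt_of_eval_index_eq_zero univ hx.injOn ?_ fun k _ => congr_fun hp0 k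
  exact (mem_degreeLT.mp hp).trans_le (by simpa using hr)

theorem finrank_reedSolomonCode (hx : Function.Injective x) (hr : r ≤ Fintype.card ι) :
    Module.finrank F (reedSolomonCode x r) = r := by
  rw [reedSolomonCode, ← LinearMap.range_domRestrict,
    LinearMap.finrank_range_of_inj (injective_evalAt_domRestrict_degreeLT hx hr),
    (degreeLTEquiv F r).finrank_eq, Module.finrank_fin_fun]

variable [DecidableEq F]

theorem card_sub_natDegree_le_hammingNorm_evalAt (hx : Function.Injective x) {p : F[X]}
    (hp : p ≠ 0) : Fintype.card ι - p.natDegree ≤ hammingNorm (evalAt x p) := by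
  have hzeros : #{k | evalAt x p k = 0} ≤ p.natDegree := by
    rw [← card_image_of_injective _ hx]
    refine card_le_degree_of_subset_roots fun a ha => ?_
    obtain ⟨k, hk, rfl⟩ := mem_image.mp ha
    exact (mem_roots hp).mpr (mem_filter.mp hk).2
  rw [hammingNorm_eq_card_sub_card_zeros]
  omega

theorem hammingNorm_evalAt_nodal (hx : Function.Injective x) (s : Finset ι) :
    hammingNorm (evalAt x (Lagrange.nodal s x)) = Fintype.card ι - #s := by
  have hzeros : ({k | evalAt x (Lagrange.nodal s x) k = 0} : Finset ι) = s := by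
    ext k
    rw [mem_filter_univ]
    simp only [evalAt_apply, Lagrange.eval_nodal, prod_eq_zero_iff, sub_eq_zero,
      hx.eq_iff, exists_eq_right']
  rw [hammingNorm_eq_card_sub_card_zeros, hzeros]

theorem le_hammingNorm_of_mem_reedSolomonCode (hx : Function.Injective x) {c : ι → F}
    (hc : c ∈ reedSolomonCode x r) (hc0 : c ≠ 0) : Fintype.card ι - r + 1 ≤ hammingNorm c := by
  obtain ⟨p, hp, rfl⟩ := hc
  have hp0 : p ≠ 0 := by
    rintro rfl
    exact hc0 (map_zero _)
  have hdeg : p.natDegree < r := (natDegree_lt_iff_degree_lt hp0).mpr (mem_degreeLT.mp hp)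
  have hweight := card_sub_natDegree_le_hammingNorm_evalAt hx hp0
  have hpos := hammingNorm_pos_iff.mpr hc0
  omega

theorem exists_mem_reedSolomonCode_hammingNorm_eq (hx : Function.Injective x) (hr1 : 1 ≤ r)
    (hr : r ≤ Fintype.card ι) :
    ∃ c ∈ reedSolomonCode x r, c ≠ 0 ∧ hammingNorm c = Fintype.card ι - r + 1 := by
  obtain ⟨s, -, hs⟩ := exists_subset_card_eq (s := (univ : Finset ι)) (n := r - 1)
    (by rw [card_univ]; omega)
  have hweight := hammingNorm_evalAt_nodal hx s
  refine ⟨evalAt x (Lagrange.nodal s x), Submodule.mem_map_of_mem ?_, ?_, by omega⟩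
  · rw [mem_degreeLT, Lagrange.degree_nodal, hs]
    exact_mod_cast Nat.sub_lt hr1 Nat.one_pos
  · rw [← hammingNorm_ne_zero_iff]
    omega

end ReedSolomon

/-- Let `ω` be a primitive `n`-th root of unity in `F` and let `A` be the `r × n`
matrix whose rows are the first `r` rows `e_0, …, e_{r-1}` of the Fourier matrix
(`e_i = (1, ω^i, ω^(2i), …)`). Then the code generated by `A` is an
`[n, r, n - r + 1]` MDS code: it has dimension `r` and minimum distance
`n - r + 1`. -/
theorem stmt_9 {F : Type*} [Field F] [DecidableEq F] {n r : ℕ}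
    (hr1 : 1 ≤ r) (hrn : r ≤ n) (ω : F) (hω : IsPrimitiveRoot ω n)
    (A : Matrix (Fin r) (Fin n) F)
    (hA : ∀ (i : Fin r) (k : Fin n), A i k = ω ^ ((i : ℕ) * (k : ℕ))) :
    Module.finrank F (Submodule.span F (Set.range A)) = r ∧
    (∀ c ∈ Submodule.span F (Set.range A), c ≠ 0 → n - r + 1 ≤ hammingNorm c) ∧
    (∃ c ∈ Submodule.span F (Set.range A), c ≠ 0 ∧ hammingNorm c = n - r + 1) := by
  set x : Fin n → F := fun k => ω ^ (k : ℕ)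
  have hx : Function.Injective x := fun a b h => Fin.ext (hω.pow_inj a.isLt b.isLt h)
  have hcode : Submodule.span F (Set.range A) = reedSolomonCode x r :=
    span_range_pow_eq_reedSolomonCode x A fun i k => by rw [hA, pow_mul']
  have hcard : r ≤ Fintype.card (Fin n) := by rwa [Fintype.card_fin]
  rw [hcode]
  refine ⟨finrank_reedSolomonCode hx hcard, fun c hc hc0 => ?_, ?_⟩
  · simpa using le_hammingNorm_of_mem_reedSolomonCode hx hc hc0
  · simpa using exists_mem_reedSolomonCode_hammingNorm_eq hx hr1 hcard
end

section
/- Let F be a field containing a primitive n-th root of unity ω, let F_n be the Fourier matrix with rows e_0, …, e_{n−1}, and let r satisfy 2r > n. Then the code C generated by the rows e_0, e_1, …, e_{r−1} is dual containing: C⊥ ⊆ C. -/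
private lemma geom_zero {F : Type*} [Field F] {n : ℕ} (x : F) (hx : x ^ n = 1)
    (hx1 : x ≠ 1) : ∑ k : Fin n, x ^ (k : ℕ) = 0 := by
  rw [Fin.sum_univ_eq_sum_range, geom_sum_eq hx1, hx, sub_self, zero_div]

/-- Let `ω` be a primitive `n`-th root of unity in `F` and `2r > n`. The code `C`
generated by the first `r` rows `e_0, …, e_{r-1}` of the Fourier matrix is
dual containing: `C⊥ ⊆ C`. -/
theorem stmt_10 {F : Type*} [Field F] {n r : ℕ}
    (hrn : r ≤ n) (h2r : n < 2 * r) (ω : F) (hω : IsPrimitiveRoot ω n)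
    (A : Matrix (Fin r) (Fin n) F)
    (hA : ∀ (i : Fin r) (k : Fin n), A i k = ω ^ ((i : ℕ) * (k : ℕ))) :
    dualCode (Submodule.span F (Set.range A)) ≤ Submodule.span F (Set.range A) := by
  intro v hv
  have hv' : ∀ u ∈ Submodule.span F (Set.range A), ∑ i, u i * v i = 0 := hv
  have hn : 0 < n := by omega
  have hpow : ω ^ n = 1 := hω.pow_eq_one
  have hω0 : ω ≠ 0 := hω.ne_zero hn.ne'
  have : NeZero n := ⟨hn.ne'⟩
  have hnF : (n : F) ≠ 0 := hω.neZero'.out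
  have hzpow : ∀ a : ℤ, ω ^ (a * (n : ℤ)) = 1 := by
    intro a
    rw [mul_comm, zpow_mul, zpow_natCast, hpow, one_zpow]
  -- the delta lemma
  have hdelta : ∀ m k : Fin n,
      (∑ j : Fin n, ω ^ ((j : ℤ) * ((k : ℤ) - (m : ℤ)))) = if k = m then (n : F) else 0 := by
    intro m k
    by_cases hkm : k = m
    · subst hkm; simp
    · rw [if_neg hkm]
      set d : ℤ := (k : ℤ) - (m : ℤ) with hd
      have hdne : d ≠ 0 := by
        have : (k : ℤ) ≠ (m : ℤ) := by
          exact_mod_cast fun h => hkm (Fin.ext h)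
        omega
      have hdabs : |d| < (n : ℤ) := by
        have hk := k.isLt; have hm := m.isLt
        rw [abs_lt]; omega
      have hx1 : ω ^ d ≠ 1 := by
        intro h1
        exact hdne (Int.eq_zero_of_abs_lt_dvd ((hω.zpow_eq_one_iff_dvd d).mp h1) hdabs)
      have hxn : (ω ^ d) ^ n = 1 := by
        rw [← zpow_natCast (ω ^ d) n, ← zpow_mul, mul_comm, zpow_mul, zpow_natCast, hpow,
          one_zpow]
      calc (∑ j : Fin n, ω ^ ((j : ℤ) * d)) = ∑ j : Fin n, (ω ^ d) ^ (j : ℕ) := by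
            refine Finset.sum_congr rfl fun j _ => ?_
            rw [← zpow_natCast (ω ^ d) (j : ℕ), ← zpow_mul, mul_comm]
        _ = 0 := geom_zero _ hxn hx1
  -- Fourier coefficients
  set c : Fin n → F := fun j => (n : F)⁻¹ * ∑ k : Fin n, v k * ω ^ (-(j : ℤ) * (k : ℤ))
    with hc
  -- inversion formula
  have hinv : ∀ k : Fin n, ∑ j : Fin n, c j * ω ^ ((j : ℤ) * (k : ℤ)) = v k := by
    intro k
    have step : ∀ j : Fin n, c j * ω ^ ((j : ℤ) * (k : ℤ))
        = (n : F)⁻¹ * ∑ m : Fin n, v m * ω ^ ((j : ℤ) * ((k : ℤ) - (m : ℤ))) := by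
      intro j
      rw [hc, mul_assoc]
      congr 1
      rw [Finset.sum_mul]
      refine Finset.sum_congr rfl fun m _ => ?_
      rw [mul_assoc, ← zpow_add₀ hω0]
      congr 1
      ring
    calc (∑ j : Fin n, c j * ω ^ ((j : ℤ) * (k : ℤ)))
        = ∑ j : Fin n, (n : F)⁻¹ * ∑ m : Fin n, v m * ω ^ ((j : ℤ) * ((k : ℤ) - (m : ℤ))) :=
          Finset.sum_congr rfl fun j _ => step j
      _ = (n : F)⁻¹ * ∑ j : Fin n, ∑ m : Fin n, v m * ω ^ ((j : ℤ) * ((k : ℤ) - (m : ℤ))) :=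
          (Finset.mul_sum _ _ _).symm
      _ = (n : F)⁻¹ * ∑ m : Fin n, ∑ j : Fin n, v m * ω ^ ((j : ℤ) * ((k : ℤ) - (m : ℤ))) := by
          rw [Finset.sum_comm]
      _ = (n : F)⁻¹ * ∑ m : Fin n, v m * ∑ j : Fin n, ω ^ ((j : ℤ) * ((k : ℤ) - (m : ℤ))) := by
          congr 1
          exact Finset.sum_congr rfl fun m _ => (Finset.mul_sum _ _ _).symm
      _ = (n : F)⁻¹ * ∑ m : Fin n, v m * (if k = m then (n : F) else 0) := by
          congr 1
          exact Finset.sum_congr rfl fun m _ => by rw [hdelta]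
      _ = v k := by
          simp only [mul_ite, mul_zero]
          rw [Finset.sum_ite_eq (Finset.univ : Finset (Fin n)) k (fun m => v m * (n : F))]
          simp only [Finset.mem_univ, if_true]
          rw [mul_comm (v k), ← mul_assoc, inv_mul_cancel₀ hnF, one_mul]
  -- express v as the combination
  have hvsum : v = ∑ j : Fin n, c j • (fun k : Fin n => ω ^ ((j : ℤ) * (k : ℤ))) := by
    funext k
    rw [Finset.sum_apply]
    simp only [Pi.smul_apply, smul_eq_mul]
    exact (hinv k).symm
  rw [hvsum]
  apply Submodule.sum_mem
  intro j _
  by_cases hj : (j : ℕ) < r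
  · apply Submodule.smul_mem
    apply Submodule.subset_span
    refine ⟨⟨(j : ℕ), hj⟩, ?_⟩
    funext k
    rw [hA]
    rw [← zpow_natCast ω]
    push_cast
    norm_cast
  · -- show c j = 0
    have hj0 : r ≤ (j : ℕ) := not_lt.mp hj
    have hjn : (j : ℕ) < n := j.isLt
    have hi : n - (j : ℕ) < r := by omega
    have key := hv' (A ⟨n - (j : ℕ), hi⟩)
      (Submodule.subset_span ⟨⟨n - (j : ℕ), hi⟩, rfl⟩)
    have hcj : c j = 0 := by
      show (n : F)⁻¹ * (∑ k : Fin n, v k * ω ^ (-(j : ℤ) * (k : ℤ))) = 0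
      have : (∑ k : Fin n, v k * ω ^ (-(j : ℤ) * (k : ℤ)))
          = ∑ k : Fin n, A ⟨n - (j : ℕ), hi⟩ k * v k := by
        refine Finset.sum_congr rfl fun k _ => ?_
        rw [hA, mul_comm]
        congr 1
        rw [← zpow_natCast ω (((⟨n - (j : ℕ), hi⟩ : Fin r) : ℕ) * (k : ℕ))]
        have hexp : (-(j : ℤ)) * (k : ℤ)
            = ((((⟨n - (j : ℕ), hi⟩ : Fin r) : ℕ) * (k : ℕ) : ℕ) : ℤ) + (-(k : ℤ)) * (n : ℤ) := by
          push_cast [Nat.cast_sub hjn.le]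
          ring
        rw [hexp, zpow_add₀ hω0, hzpow, mul_one]
      rw [this, key, mul_zero]
    rw [hcj, zero_smul]
    exact Submodule.zero_mem _
end

section
/- Let F be a field containing a primitive n-th root of unity ω, let F_n be the Fourier matrix with rows e_0, …, e_{n−1}, and let a, k be integers with gcd(k, n) = 1 and 1 ≤ r ≤ n. Then the code generated by the r rows e_{a mod n}, e_{(a+k) mod n}, …, e_{(a+(r−1)k) mod n} (indices taken modulo n) is an [n, r, n−r+1] MDS code. -/
/-! With `ζ = ω ^ k`, again a primitive `n`-th root of unity because `gcd(k, n) = 1`, the entry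
`ω ^ (((a + j k) mod n) t)` equals `ω ^ (a t) * (ζ ^ t) ^ j`. So the code is a generalized
Reed–Solomon code: its codewords are `(ω ^ (a t) * p(ζ ^ t))_t` for the polynomials `p` of degree
`< r`, evaluated at the `n` distinct points `ζ ^ t`. A nonzero such `p` has at most `r - 1` roots,
which gives weight `≥ n - r + 1` and, as `r ≤ n`, injectivity of the encoding; a product of
`r - 1` linear factors `X - ζ ^ t` attains the bound. -/

open Polynomial Finset Matrix

theorem span_range_eq_range_vecMulLinear {m n R : Type*} [Semiring R] [Fintype m]
    (M : Matrix m n R) : Submodule.span R (Set.range M) = LinearMap.range M.vecMulLinear :=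
  (range_vecMulLinear M).symm

section GeneralizedReedSolomon

variable {F ι : Type*} [Field F]

/-- Generator matrix of the generalized Reed–Solomon code with column multipliers `u` and
evaluation points `x`. -/
def grsMatrix (u x : ι → F) (r : ℕ) : Matrix (Fin r) ι F :=
  fun j t => u t * x t ^ (j : ℕ)

variable {u x : ι → F} {r : ℕ}

theorem vecMul_grsMatrix_degreeLTEquiv (p : degreeLT F r) (t : ι) :
    (degreeLTEquiv F r p ᵥ* grsMatrix u x r) t = u t * p.1.eval (x t) := by
  rw [eval_eq_sum_degreeLTEquiv p.2, mul_sum]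
  simp only [vecMul, dotProduct, grsMatrix]
  exact sum_congr rfl fun j _ => by ring

variable [Fintype ι] [DecidableEq F]

theorem hammingNorm_add_card_filter_eq_zero (c : ι → F) :
    hammingNorm c + #{t | c t = 0} = Fintype.card ι := by
  rw [hammingNorm, add_comm, card_filter_add_card_filter_not, card_univ]

theorem card_lt_hammingNorm_vecMul_grsMatrix_add (hu : ∀ t, u t ≠ 0) (hx : Function.Injective x)
    {v : Fin r → F} (hv : v ≠ 0) :
    Fintype.card ι < hammingNorm (v ᵥ* grsMatrix u x r) + r := by
  obtain ⟨p, rfl⟩ := (degreeLTEquiv F r).surjective v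
  set c := degreeLTEquiv F r p ᵥ* grsMatrix u x r
  have hp : p.1 ≠ 0 := by simpa using hv
  have hdeg : p.1.natDegree < r := (natDegree_lt_iff_degree_lt hp).2 (mem_degreeLT.1 p.2)
  have hzeros : #{t | c t = 0} ≤ p.1.natDegree := by
    by_contra! hlt
    refine hp (eq_zero_of_natDegree_lt_card_of_eval_eq_zero' _ (image x {t | c t = 0}) ?_ ?_)
    · simp only [mem_image, mem_filter, c, vecMul_grsMatrix_degreeLTEquiv]
      rintro _ ⟨t, ⟨-, ht⟩, rfl⟩
      exact (mul_eq_zero.1 ht).resolve_left (hu t)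
    · rwa [card_image_of_injective _ hx]
  have := hammingNorm_add_card_filter_eq_zero c
  omega

theorem finrank_span_range_grsMatrix (hu : ∀ t, u t ≠ 0) (hx : Function.Injective x)
    (hr : r ≤ Fintype.card ι) :
    Module.finrank F (Submodule.span F (Set.range (grsMatrix u x r))) = r := by
  have hinj : Function.Injective (grsMatrix u x r).vecMulLinear := by
    rw [← LinearMap.ker_eq_bot, LinearMap.ker_eq_bot']
    intro v hv
    by_contra hv0
    have := card_lt_hammingNorm_vecMul_grsMatrix_add hu hx hv0
    rw [vecMulLinear_apply] at hv
    rw [hv, hammingNorm_zero] at this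
    omega
  rw [span_range_eq_range_vecMulLinear, LinearMap.finrank_range_of_inj hinj,
    Module.finrank_fin_fun]

theorem exists_mem_span_range_grsMatrix_hammingNorm_eq (hu : ∀ t, u t ≠ 0)
    (hx : Function.Injective x) (hr1 : 1 ≤ r) (hr : r ≤ Fintype.card ι) :
    ∃ c ∈ Submodule.span F (Set.range (grsMatrix u x r)), c ≠ 0 ∧
      hammingNorm c = Fintype.card ι - r + 1 := by
  obtain ⟨S, -, hS⟩ := exists_subset_card_eq (s := (univ : Finset ι)) (n := r - 1)
    (by rw [card_univ]; omega)
  set p : F[X] := ∏ s ∈ S, (X - C (x s))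
  have hp : p ∈ degreeLT F r := by
    rw [mem_degreeLT, degree_prod]
    simp only [degree_X_sub_C, sum_const, nsmul_eq_mul, mul_one, Nat.cast_lt]
    omega
  have hzero : ∀ t, u t * p.eval (x t) = 0 ↔ t ∈ S := by
    intro t
    simp [p, eval_prod, prod_eq_zero_iff, hu t, sub_eq_zero, hx.eq_iff]
  set c := degreeLTEquiv F r ⟨p, hp⟩ ᵥ* grsMatrix u x r
  have hnorm : hammingNorm c = Fintype.card ι - r + 1 := by
    have h := hammingNorm_add_card_filter_eq_zero c
    have : ({t | c t = 0} : Finset ι) = S := by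
      ext t; simp [c, vecMul_grsMatrix_degreeLTEquiv, hzero]
    rw [this, hS] at h
    omega
  refine ⟨c, ?_, ?_, hnorm⟩
  · rw [span_range_eq_range_vecMulLinear]
    exact ⟨_, rfl⟩
  · rw [← hammingNorm_pos_iff, hnorm]
    omega

end GeneralizedReedSolomon

theorem IsPrimitiveRoot.pow_mod_mul_eq {M : Type*} [CommMonoid M] {ω : M} {n : ℕ}
    (hω : IsPrimitiveRoot ω n) (a k j t : ℕ) :
    ω ^ ((a + j * k) % n * t) = ω ^ (a * t) * ((ω ^ k) ^ t) ^ j := by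
  rw [pow_mul, hω.eq_orderOf, pow_mod_orderOf, ← pow_mul, ← pow_mul, ← pow_mul, ← pow_add]
  ring_nf

/-- Let `ω` be a primitive `n`-th root of unity in `F`, and `a, k` with
`gcd(k, n) = 1`. The code generated by the `r` Fourier-matrix rows
`e_{(a + j*k) mod n}` for `j = 0, …, r-1` is an `[n, r, n - r + 1]` MDS code. -/
theorem stmt_11 {F : Type*} [Field F] [DecidableEq F] {n r : ℕ}
    (hr1 : 1 ≤ r) (hrn : r ≤ n) (ω : F) (hω : IsPrimitiveRoot ω n)
    (a k : ℕ) (hk : Nat.gcd k n = 1)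
    (A : Matrix (Fin r) (Fin n) F)
    (hA : ∀ (j : Fin r) (t : Fin n), A j t = ω ^ ((((a + (j : ℕ) * k) % n)) * (t : ℕ))) :
    Module.finrank F (Submodule.span F (Set.range A)) = r ∧
    (∀ c ∈ Submodule.span F (Set.range A), c ≠ 0 → n - r + 1 ≤ hammingNorm c) ∧
    (∃ c ∈ Submodule.span F (Set.range A), c ≠ 0 ∧ hammingNorm c = n - r + 1) := by
  have hu : ∀ t : Fin n, ω ^ (a * (t : ℕ)) ≠ 0 :=
    fun t => pow_ne_zero _ (hω.ne_zero (by omega))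
  have hx : Function.Injective fun t : Fin n => (ω ^ k) ^ (t : ℕ) :=
    fun s t h => Fin.ext ((hω.pow_of_coprime k hk).pow_inj s.isLt t.isLt h)
  obtain rfl : A = grsMatrix (fun t : Fin n => ω ^ (a * (t : ℕ))) (fun t => (ω ^ k) ^ (t : ℕ)) r :=
    Matrix.ext fun j t => (hA j t).trans (hω.pow_mod_mul_eq a k j t)
  have hrn' : r ≤ Fintype.card (Fin n) := by rwa [Fintype.card_fin]
  refine ⟨finrank_span_range_grsMatrix hu hx hrn', fun c hc hc0 => ?_,
    by simpa using exists_mem_span_range_grsMatrix_hammingNorm_eq hu hx hr1 hrn'⟩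
  rw [span_range_eq_range_vecMulLinear] at hc
  obtain ⟨v, rfl⟩ := hc
  have hv : v ≠ 0 := by rintro rfl; simp at hc0
  have := card_lt_hammingNorm_vecMul_grsMatrix_add hu hx hv
  rw [Fintype.card_fin] at this
  simp only [vecMulLinear_apply]
  omega
end

section
/- Let U be an invertible 2n×2n matrix over a field F with U = [A;B], where A and B are n×2n. Let d₁ be the minimum distance of the linear code generated by A and d₂ the minimum distance of the linear code generated by B. Then for every nonzero row vector p ∈ (F[z])ⁿ of support s, the weight of the codeword p·(A + Bz) ∈ (F[z])^{2n} is at least d₁ + d₂ + s − 1. In particular the free distance of the convolutional code generated by G(z) = A + Bz is at least d₁ + d₂. -/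
/-!
Write `p = ∑ p_k z^k` and `c = p (A + Bz) = ∑ c_k z^k`, so that `c_k = p_k A + p_{k-1} B`.
Since `[A; B]` is invertible, `c_k ≠ 0` whenever `p_k ≠ 0`, which accounts for `s` nonzero
coefficients. At the lowest index `k₀` of the support `c_{k₀} = p_{k₀} A` is a nonzero codeword of
the code of `A`, hence has weight `≥ d₁`; one past the highest index `k₁`,
`c_{k₁+1} = p_{k₁} B` is a nonzero codeword of the code of `B`, of weight `≥ d₂`. Counting weight
`≥ 1` for the remaining `s - 1` support indices gives `d₁ + d₂ + s - 1`.
-/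

open Polynomial Matrix Finset

section Coefficients

variable {R ι : Type*}

def coeffVec [Semiring R] (p : ι → R[X]) (k : ℕ) : ι → R := fun i => (p i).coeff k

@[simp]
lemma coeffVec_apply [Semiring R] (p : ι → R[X]) (k : ℕ) (i : ι) :
    coeffVec p k i = (p i).coeff k := rfl

lemma coeffVec_add [Semiring R] (p q : ι → R[X]) (k : ℕ) :
    coeffVec (p + q) k = coeffVec p k + coeffVec q k := by
  ext i; simp

lemma coeffVec_X_smul_succ [Semiring R] (p : ι → R[X]) (k : ℕ) :
    coeffVec ((X : R[X]) • p) (k + 1) = coeffVec p k := by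
  ext i; simp

lemma coeffVec_X_smul_zero [Semiring R] (p : ι → R[X]) :
    coeffVec ((X : R[X]) • p) 0 = 0 := by
  ext i; simp

lemma coeffVec_vecMul_map_C [CommSemiring R] {κ : Type*} [Fintype ι] (p : ι → R[X])
    (M : Matrix ι κ R) (k : ℕ) :
    coeffVec (p ᵥ* M.map C) k = coeffVec p k ᵥ* M := by
  ext j; simp [vecMul, dotProduct, finsetSum_coeff]

variable [Semiring R] [Fintype ι]

lemma mem_biUnion_support_iff (p : ι → R[X]) (k : ℕ) :
    k ∈ univ.biUnion (fun i => (p i).support) ↔ coeffVec p k ≠ 0 := by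
  simp [Function.ne_iff]

lemma coeffVec_X_smul_eq_zero_of_le_min' (p : ι → R[X])
    (hK : (univ.biUnion fun i => (p i).support).Nonempty) {k : ℕ}
    (hk : k ≤ (univ.biUnion fun i => (p i).support).min' hK) :
    coeffVec ((X : R[X]) • p) k = 0 := by
  cases k with
  | zero => exact coeffVec_X_smul_zero p
  | succ m =>
    rw [coeffVec_X_smul_succ]
    by_contra h
    have := min'_le _ _ ((mem_biUnion_support_iff p m).2 h)
    omega

lemma coeffVec_eq_zero_of_max'_lt (p : ι → R[X])
    (hK : (univ.biUnion fun i => (p i).support).Nonempty) {k : ℕ}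
    (hk : (univ.biUnion fun i => (p i).support).max' hK < k) :
    coeffVec p k = 0 := by
  by_contra h
  have := le_max' _ _ ((mem_biUnion_support_iff p k).2 h)
  omega

lemma sum_hammingNorm_coeffVec_le [DecidableEq R] (c : ι → R[X]) (S : Finset ℕ) :
    ∑ k ∈ S, hammingNorm (coeffVec c k) ≤ ∑ i, (c i).support.card := by
  calc ∑ k ∈ S, hammingNorm (coeffVec c k)
      = ∑ k ∈ S, ∑ i, if (c i).coeff k ≠ 0 then 1 else 0 := by
        refine sum_congr rfl fun k _ => ?_
        rw [hammingNorm, card_filter]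
        rfl
    _ = ∑ i, (S.filter fun k => (c i).coeff k ≠ 0).card := by
        rw [sum_comm]
        simp only [card_filter]
    _ ≤ ∑ i, (c i).support.card := by
        gcongr with i
        intro k
        simp

end Coefficients

lemma eq_zero_of_vecMul_add_vecMul_eq_zero {R m₁ m₂ n : Type*} [Semiring R]
    [Fintype m₁] [Fintype m₂] [DecidableEq m₁] [DecidableEq m₂] [Fintype n]
    {A : Matrix m₁ n R} {B : Matrix m₂ n R}
    {V : Matrix n (m₁ ⊕ m₂) R} (hUV : fromRows A B * V = 1) {v : m₁ → R} {w : m₂ → R}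
    (h : v ᵥ* A + w ᵥ* B = 0) : v = 0 ∧ w = 0 := by
  have hvw : Sum.elim v w = 0 := by
    calc Sum.elim v w = Sum.elim v w ᵥ* fromRows A B ᵥ* V := by
          rw [vecMul_vecMul, hUV, vecMul_one]
      _ = 0 := by rw [sumElim_vecMul_fromRows, h, zero_vecMul]
  exact ⟨funext fun i => congrFun hvw (.inl i), funext fun i => congrFun hvw (.inr i)⟩

lemma vecMul_mem_span_range {R m n : Type*} [CommSemiring R] [Fintype m]
    (M : Matrix m n R) (x : m → R) : x ᵥ* M ∈ Submodule.span R (Set.range M) :=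
  (range_vecMulLinear M).le ⟨x, rfl⟩

section ConvolutionalCode

variable {R ι κ : Type*} [CommSemiring R] [Fintype ι]

lemma coeffVec_vecMul_add_X_smul (p : ι → R[X]) (A B : Matrix ι κ R) (k : ℕ) :
    coeffVec (p ᵥ* (A.map C + (X : R[X]) • B.map C)) k =
      coeffVec p k ᵥ* A + coeffVec ((X : R[X]) • p) k ᵥ* B := by
  rw [vecMul_add, vecMul_smul, ← smul_vecMul, coeffVec_add, coeffVec_vecMul_map_C,
    coeffVec_vecMul_map_C]

lemma coeffVec_vecMul_add_X_smul_min' (p : ι → R[X]) (A B : Matrix ι κ R)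
    (hK : (univ.biUnion fun i => (p i).support).Nonempty) :
    coeffVec (p ᵥ* (A.map C + (X : R[X]) • B.map C))
        ((univ.biUnion fun i => (p i).support).min' hK) =
      coeffVec p ((univ.biUnion fun i => (p i).support).min' hK) ᵥ* A := by
  rw [coeffVec_vecMul_add_X_smul, coeffVec_X_smul_eq_zero_of_le_min' p hK le_rfl, zero_vecMul,
    add_zero]

lemma coeffVec_vecMul_add_X_smul_max'_succ (p : ι → R[X]) (A B : Matrix ι κ R)
    (hK : (univ.biUnion fun i => (p i).support).Nonempty) :
    coeffVec (p ᵥ* (A.map C + (X : R[X]) • B.map C))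
        ((univ.biUnion fun i => (p i).support).max' hK + 1) =
      coeffVec p ((univ.biUnion fun i => (p i).support).max' hK) ᵥ* B := by
  rw [coeffVec_vecMul_add_X_smul, coeffVec_X_smul_succ,
    coeffVec_eq_zero_of_max'_lt p hK (Nat.lt_succ_self _), zero_vecMul, zero_add]

end ConvolutionalCode

lemma add_add_card_sub_one_le_sum_insert {α : Type*} [DecidableEq α] (f : α → ℕ)
    {K : Finset α} {a t : α} (ha : a ∈ K) (ht : t ∉ K) (hf : ∀ k ∈ K, f k ≠ 0) :
    f a + f t + (#K - 1) ≤ ∑ k ∈ insert t K, f k := by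
  have hrest : #(K.erase a) ≤ ∑ k ∈ K.erase a, f k := by
    simpa using card_nsmul_le_sum (K.erase a) f 1 fun k hk =>
      Nat.one_le_iff_ne_zero.2 (hf k (mem_of_mem_erase hk))
  rw [card_erase_of_mem ha] at hrest
  rw [sum_insert ht, ← add_sum_erase K f ha]
  omega

theorem stmt_14_general {F : Type*} [Field F] [DecidableEq F] {n : ℕ}
    (A B : Matrix (Fin n) (Fin (2 * n)) F)
    (V : Matrix (Fin (2 * n)) (Fin n ⊕ Fin n) F)
    (hUV : Matrix.fromRows A B * V = 1)
    (d₁ d₂ : ℕ)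
    (hd₁ : (∀ c ∈ Submodule.span F (Set.range A), c ≠ 0 → d₁ ≤ hammingNorm c) ∧
      ∃ c ∈ Submodule.span F (Set.range A), c ≠ 0 ∧ hammingNorm c = d₁)
    (hd₂ : (∀ c ∈ Submodule.span F (Set.range B), c ≠ 0 → d₂ ≤ hammingNorm c) ∧
      ∃ c ∈ Submodule.span F (Set.range B), c ≠ 0 ∧ hammingNorm c = d₂) :
    (∀ p : Fin n → Polynomial F, p ≠ 0 →
      d₁ + d₂ + ((Finset.univ.biUnion fun i => (p i).support).card - 1) ≤
        ∑ j, ((Matrix.vecMul p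
          (A.map Polynomial.C +
            (Polynomial.X : Polynomial F) • B.map Polynomial.C)) j).support.card) ∧
    (∀ p : Fin n → Polynomial F, p ≠ 0 →
      d₁ + d₂ ≤
        ∑ j, ((Matrix.vecMul p
          (A.map Polynomial.C +
            (Polynomial.X : Polynomial F) • B.map Polynomial.C)) j).support.card) := by
  have weight_bound : ∀ p : Fin n → F[X], p ≠ 0 →
      d₁ + d₂ + (#(univ.biUnion fun i => (p i).support) - 1) ≤
        ∑ j, ((p ᵥ* (A.map C + (X : F[X]) • B.map C)) j).support.card := by
    intro p hp
    set K := univ.biUnion fun i => (p i).support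
    set c := p ᵥ* (A.map C + (X : F[X]) • B.map C)
    obtain ⟨i, hi⟩ := Function.ne_iff.1 hp
    obtain ⟨k, hk⟩ := support_nonempty.2 hi
    have hK : K.Nonempty := ⟨k, mem_biUnion.2 ⟨i, mem_univ i, hk⟩⟩
    have hpK : ∀ k ∈ K, coeffVec p k ≠ 0 := fun k => (mem_biUnion_support_iff p k).1
    have hcK : ∀ k ∈ K, hammingNorm (coeffVec c k) ≠ 0 := fun k hk hc =>
      hpK k hk (eq_zero_of_vecMul_add_vecMul_eq_zero hUV
        ((coeffVec_vecMul_add_X_smul p A B k).symm.trans (hammingNorm_eq_zero.1 hc))).1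
    have hbot : d₁ ≤ hammingNorm (coeffVec c (K.min' hK)) := by
      refine hd₁.1 _ ?_ (hammingNorm_ne_zero_iff.1 (hcK _ (K.min'_mem hK)))
      rw [coeffVec_vecMul_add_X_smul_min']
      exact vecMul_mem_span_range A _
    have htop : d₂ ≤ hammingNorm (coeffVec c (K.max' hK + 1)) := by
      rw [coeffVec_vecMul_add_X_smul_max'_succ]
      refine hd₂.1 _ (vecMul_mem_span_range B _) fun h => hpK _ (K.max'_mem hK) ?_
      exact (eq_zero_of_vecMul_add_vecMul_eq_zero hUV (v := 0) (by rwa [zero_vecMul, zero_add])).2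
    calc d₁ + d₂ + (#K - 1)
        ≤ hammingNorm (coeffVec c (K.min' hK)) + hammingNorm (coeffVec c (K.max' hK + 1)) +
            (#K - 1) := by gcongr
      _ ≤ ∑ k ∈ insert (K.max' hK + 1) K, hammingNorm (coeffVec c k) :=
          add_add_card_sub_one_le_sum_insert _ (K.min'_mem hK)
            (fun h => (K.le_max' _ h).not_gt (Nat.lt_succ_self _)) hcK
      _ ≤ ∑ j, (c j).support.card := sum_hammingNorm_coeffVec_le c _
  exact ⟨weight_bound, fun p hp => (Nat.le_add_right _ _).trans (weight_bound p hp)⟩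

/-- Let `U = [A; B]` be an invertible `2n × 2n` matrix, `d₁`, `d₂` the minimum
distances of the linear codes generated by `A` and `B`. For every nonzero row
vector `p` over `F[z]` with support size `s` (the number of exponents `k` whose
coefficient vector `p_k` is nonzero), the weight of `p * (A + Bz)` is at least
`d₁ + d₂ + s - 1`; in particular the free distance of the convolutional code
generated by `G(z) = A + Bz` is at least `d₁ + d₂`.  The weight of a polynomial
vector `c` is `∑ j, (c j).support.card`, the total number of nonzero field
coefficients. -/
theorem stmt_14 {F : Type*} [Field F] [DecidableEq F] {n : ℕ}
    (A B : Matrix (Fin n) (Fin (2 * n)) F)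
    (V : Matrix (Fin (2 * n)) (Fin n ⊕ Fin n) F)
    (hUV : Matrix.fromRows A B * V = 1) (hVU : V * Matrix.fromRows A B = 1)
    (d₁ d₂ : ℕ)
    (hd₁ : (∀ c ∈ Submodule.span F (Set.range A), c ≠ 0 → d₁ ≤ hammingNorm c) ∧
      ∃ c ∈ Submodule.span F (Set.range A), c ≠ 0 ∧ hammingNorm c = d₁)
    (hd₂ : (∀ c ∈ Submodule.span F (Set.range B), c ≠ 0 → d₂ ≤ hammingNorm c) ∧
      ∃ c ∈ Submodule.span F (Set.range B), c ≠ 0 ∧ hammingNorm c = d₂) :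
    (∀ p : Fin n → Polynomial F, p ≠ 0 →
      d₁ + d₂ + ((Finset.univ.biUnion fun i => (p i).support).card - 1) ≤
        ∑ j, ((Matrix.vecMul p
          (A.map Polynomial.C +
            (Polynomial.X : Polynomial F) • B.map Polynomial.C)) j).support.card) ∧
    (∀ p : Fin n → Polynomial F, p ≠ 0 →
      d₁ + d₂ ≤
        ∑ j, ((Matrix.vecMul p
          (A.map Polynomial.C +
            (Polynomial.X : Polynomial F) • B.map Polynomial.C)) j).support.card) :=
  stmt_14_general A B V hUV d₁ d₂ hd₁ hd₂
end

section
/- Let U = [A;B] be an invertible n×n matrix over a field F with A of size r×n and B of size (n−r)×n, where 2r > n, and let U⁻¹ = (C | D) with C of size n×r and D of size n×(n−r). Set t = 2r − n, let B₁ be the r×n matrix obtained by stacking the t×n zero matrix on top of B, and write C = (X | C₁) where C₁ consists of the last n−r columns of C. Then over F[z]: (i) (A + B₁z)·(D − C₁z) = 0, so D − C₁z is a control matrix of the memory-1 convolutional code generated by G(z) = A + B₁z; and (ii) (A + B₁z)·C = I_r, so G(z) has a right polynomial inverse and the code is non-catastrophic. -/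
/-!
Let `P` be the `r × (n - r)` matrix `[0; I]` with `t = 2r - n` zero rows. Then `B₁ = P B` and
`C₁ = C P`, and `U U⁻¹ = I` gives `A C = I`, `A D = 0`, `B C = 0`, `B D = I`. Hence
`(A + z P B)(D - z C P) = A D + z (P B D - A C P) - z² P (B C) P = 0` and
`(A + z P B) C = A C + z P (B C) = I`; nothing about `P` beyond its shape is needed.
-/

open Matrix

namespace Matrix

section BlockInverse

variable {R : Type*} [CommRing R] {m m' n : Type*} [Fintype m'] [Fintype n]
  [DecidableEq m]
  {A : Matrix m n R} {B : Matrix m' n R} {C : Matrix n m R} {D : Matrix n m' R}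

theorem add_smul_mul_mul_sub_smul_mul_eq_zero [Fintype m] [DecidableEq m'] (hAC : A * C = 1)
    (hAD : A * D = 0) (hBC : B * C = 0) (hBD : B * D = 1) (P : Matrix m m' R) (z : R) :
    (A + z • (P * B)) * (D - z • (C * P)) = 0 := by
  have hcross : A * (C * P) = P * B * D := by
    rw [← Matrix.mul_assoc, hAC, Matrix.mul_assoc, hBD, Matrix.one_mul, Matrix.mul_one]
  have hquad : P * B * (C * P) = 0 := by
    rw [Matrix.mul_assoc, ← Matrix.mul_assoc B, hBC, Matrix.zero_mul, Matrix.mul_zero]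
  simp only [Matrix.add_mul, Matrix.mul_sub, Matrix.smul_mul, Matrix.mul_smul, hAD, hcross,
    hquad, smul_zero, zero_add, add_zero, sub_self]

theorem add_smul_mul_mul_eq_one (hAC : A * C = 1) (hBC : B * C = 0) (P : Matrix m m' R)
    (z : R) : (A + z • (P * B)) * C = 1 := by
  rw [Matrix.add_mul, Matrix.smul_mul, Matrix.mul_assoc, hBC, Matrix.mul_zero, smul_zero,
    add_zero, hAC]

end BlockInverse

section ShiftedIdentity

def shiftedIdentity (R : Type*) [Zero R] [One R] (r m t : ℕ) : Matrix (Fin r) (Fin m) R :=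
  of fun i j => if (i : ℕ) = t + j then 1 else 0

variable {R : Type*} [Semiring R] {r m : ℕ}

theorem mul_shiftedIdentity_apply {k : Type*} {t : ℕ} (h : t + m = r)
    (M : Matrix k (Fin r) R) (i : k) (j : Fin m) :
    (M * shiftedIdentity R r m t) i j = M i ⟨t + j, by have := j.isLt; omega⟩ := by
  rw [mul_apply, Finset.sum_eq_single ⟨t + j, by have := j.isLt; omega⟩]
  · simp [shiftedIdentity]
  · intro l _ hl
    simp only [shiftedIdentity, of_apply, mul_ite, mul_one, mul_zero, ite_eq_right_iff]
    exact fun hlj => absurd (Fin.ext hlj) hl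
  · simp

theorem shiftedIdentity_mul_apply {k : Type*} [Fintype k] {t : ℕ} (h : t + m = r)
    (M : Matrix (Fin m) k R) (i : Fin r) (j : k) :
    (shiftedIdentity R r m t * M) i j =
      if hi : (i : ℕ) < t then 0 else M ⟨i - t, by have := i.isLt; omega⟩ j := by
  split_ifs with hi
  · refine (mul_apply ..).trans <| Finset.sum_eq_zero fun l _ => ?_
    rw [shiftedIdentity, of_apply, if_neg (by omega), zero_mul]
  · rw [mul_apply, Finset.sum_eq_single ⟨i - t, by have := i.isLt; omega⟩]
    · rw [shiftedIdentity, of_apply, if_pos (by simp only; omega), one_mul]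
    · intro l _ hl
      simp only [shiftedIdentity, of_apply, ite_mul, one_mul, zero_mul, ite_eq_right_iff]
      exact fun hil => absurd (Fin.ext (by simp only; omega)) hl
    · simp

end ShiftedIdentity

end Matrix

/-- Let `U = [A; B]` be an invertible `n × n` matrix with `A` of size `r × n`,
`B` of size `(n-r) × n`, `2r > n`, and `U⁻¹ = (C | D)`. With `t = 2r - n`,
`B₁ = [0_{t×n}; B]` and `C₁` the last `n - r` columns of `C`, over `F[z]`:
(i) `(A + B₁z) * (D - C₁z) = 0`, so `D - C₁z` is a control matrix of the
memory-1 convolutional code generated by `G(z) = A + B₁z`; and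
(ii) `(A + B₁z) * C = I_r`, so `G(z)` has a right polynomial inverse and the
code is non-catastrophic. -/
theorem stmt_16 {F : Type*} [Field F] {n r : ℕ}
    (hrn : r ≤ n) (h2r : n < 2 * r)
    (A : Matrix (Fin r) (Fin n) F) (B : Matrix (Fin (n - r)) (Fin n) F)
    (C : Matrix (Fin n) (Fin r) F) (D : Matrix (Fin n) (Fin (n - r)) F)
    (hUV : Matrix.fromRows A B * Matrix.fromCols C D = 1)
    (B₁ : Matrix (Fin r) (Fin n) F)
    (hB₁ : ∀ (i : Fin r) (j : Fin n), B₁ i j =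
      if h : (i : ℕ) < 2 * r - n then 0
      else B ⟨(i : ℕ) - (2 * r - n), by have := i.isLt; omega⟩ j)
    (C₁ : Matrix (Fin n) (Fin (n - r)) F)
    (hC₁ : ∀ (i : Fin n) (j : Fin (n - r)), C₁ i j =
      C i ⟨2 * r - n + (j : ℕ), by have := j.isLt; omega⟩) :
    (A.map Polynomial.C + (Polynomial.X : Polynomial F) • B₁.map Polynomial.C) *
      (D.map Polynomial.C - (Polynomial.X : Polynomial F) • C₁.map Polynomial.C) = 0 ∧
    (A.map Polynomial.C + (Polynomial.X : Polynomial F) • B₁.map Polynomial.C) *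
      C.map Polynomial.C = 1 := by
  rw [fromRows_mul_fromCols, ← fromBlocks_one] at hUV
  obtain ⟨hAC, hAD, hBC, hBD⟩ := fromBlocks_inj.mp hUV
  have ht : 2 * r - n + (n - r) = r := by omega
  obtain rfl : B₁ = shiftedIdentity F r (n - r) (2 * r - n) * B :=
    ext fun i j => (hB₁ i j).trans (shiftedIdentity_mul_apply ht B i j).symm
  obtain rfl : C₁ = C * shiftedIdentity F r (n - r) (2 * r - n) :=
    ext fun i j => (hC₁ i j).trans (mul_shiftedIdentity_apply ht C i j).symm
  have hAC' : A.map Polynomial.C * C.map Polynomial.C = 1 := by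
    rw [← Matrix.map_mul, hAC, Matrix.map_one _ Polynomial.C_0 Polynomial.C_1]
  have hAD' : A.map Polynomial.C * D.map Polynomial.C = 0 := by
    rw [← Matrix.map_mul, hAD, Matrix.map_zero _ Polynomial.C_0]
  have hBC' : B.map Polynomial.C * C.map Polynomial.C = 0 := by
    rw [← Matrix.map_mul, hBC, Matrix.map_zero _ Polynomial.C_0]
  have hBD' : B.map Polynomial.C * D.map Polynomial.C = 1 := by
    rw [← Matrix.map_mul, hBD, Matrix.map_one _ Polynomial.C_0 Polynomial.C_1]
  simp only [Matrix.map_mul]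
  exact ⟨add_smul_mul_mul_sub_smul_mul_eq_zero hAC' hAD' hBC' hBD' _ _,
    add_smul_mul_mul_eq_one hAC' hBC' _ _⟩
end

section
/- Let U be an invertible 4n×4n matrix over a field F, partitioned as U = [A;B;C;D] with each of A, B, C, D of size n×4n, and U⁻¹ = (E | F | G | H) with each of E, F, G, H of size 4n×n (so that, e.g., AE = Iₙ, AF = AG = AH = 0, BF = Iₙ, CG = Iₙ, DH = Iₙ, and all other cross products vanish). Then over F[z] the memory-3 generator matrix G(z) = A + Bz + Cz² + Dz³ satisfies: (i) G(z)·K(z) = 0, where K(z) = (F | G | H) − (E | H | G)z − (H | E | F)z² + (G | F | E)z³ is a 4n×3n polynomial control matrix; and (ii) G(z)·E = Iₙ, so G(z) has a right polynomial inverse and the convolutional (4n, n) code generated by G(z) is non-catastrophic. -/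
open Matrix Polynomial

/-! With `P = (A, B, C, D)` and `Q = (E, F, G, H)`, the relation `U U⁻¹ = 1` says
`Pᵢ Qⱼ = δᵢⱼ`, hence `G(z) Qⱼ = zʲ`. So `G(z) E = 1`, and every column block of `G(z) K(z)` is a
signed sum of four powers of `z` that cancel in pairs. -/

namespace Matrix

variable {R m m₁ m₂ n n₁ n₂ : Type*}

lemma fromCols_add [Add R] (A₁ B₁ : Matrix m n₁ R) (A₂ B₂ : Matrix m n₂ R) :
    fromCols A₁ A₂ + fromCols B₁ B₂ = fromCols (A₁ + B₁) (A₂ + B₂) := by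
  ext i (j | j) <;> rfl

lemma fromCols_sub [Sub R] (A₁ B₁ : Matrix m n₁ R) (A₂ B₂ : Matrix m n₂ R) :
    fromCols A₁ A₂ - fromCols B₁ B₂ = fromCols (A₁ - B₁) (A₂ - B₂) := by
  ext i (j | j) <;> rfl

lemma smul_fromCols {S : Type*} [SMul S R] (s : S) (A₁ : Matrix m n₁ R) (A₂ : Matrix m n₂ R) :
    s • fromCols A₁ A₂ = fromCols (s • A₁) (s • A₂) := by
  ext i (j | j) <;> rfl

variable [Semiring R] [Fintype n]

lemma mul_fromCols_eq_zero_iff (A : Matrix m n R) (B₁ : Matrix n n₁ R) (B₂ : Matrix n n₂ R) :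
    A * fromCols B₁ B₂ = 0 ↔ A * B₁ = 0 ∧ A * B₂ = 0 := by
  rw [mul_fromCols, ← fromCols_zero, fromCols_inj.eq_iff]

lemma fromRows_mul_eq_zero_iff (A₁ : Matrix m₁ n R) (A₂ : Matrix m₂ n R) (B : Matrix n m R) :
    fromRows A₁ A₂ * B = 0 ↔ A₁ * B = 0 ∧ A₂ * B = 0 := by
  rw [fromRows_mul, ← fromRows_zero, fromRows_inj.eq_iff]

lemma fromRows_mul_fromCols_eq_one_iff [DecidableEq m₁] [DecidableEq m₂]
    (A₁ : Matrix m₁ n R) (A₂ : Matrix m₂ n R) (B₁ : Matrix n m₁ R) (B₂ : Matrix n m₂ R) :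
    fromRows A₁ A₂ * fromCols B₁ B₂ = 1 ↔
      A₁ * B₁ = 1 ∧ A₁ * B₂ = 0 ∧ A₂ * B₁ = 0 ∧ A₂ * B₂ = 1 := by
  rw [fromRows_mul_fromCols, ← fromBlocks_one, fromBlocks_inj]

end Matrix

lemma cubic_map_C_mul_map_C {R m n l : Type*} [CommSemiring R] [Fintype n]
    (P₀ P₁ P₂ P₃ : Matrix m n R) (Q : Matrix n l R) :
    (P₀.map C + (X : R[X]) • P₁.map C + (X : R[X]) ^ 2 • P₂.map C + (X : R[X]) ^ 3 • P₃.map C) *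
        Q.map C =
      (P₀ * Q).map C + (X : R[X]) • (P₁ * Q).map C + (X : R[X]) ^ 2 • (P₂ * Q).map C +
        (X : R[X]) ^ 3 • (P₃ * Q).map C := by
  simp only [Matrix.add_mul, Matrix.smul_mul, ← Matrix.map_mul (f := (C : R →+* R[X]))]

theorem stmt_19_general {K : Type*} [Field K] {n : ℕ}
    (A B C D : Matrix (Fin n) (Fin (4 * n)) K)
    (E F G H : Matrix (Fin (4 * n)) (Fin n) K)
    (hUV : Matrix.fromRows A (Matrix.fromRows B (Matrix.fromRows C D)) *
      Matrix.fromCols E (Matrix.fromCols F (Matrix.fromCols G H)) = 1) :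
    (A.map Polynomial.C + (Polynomial.X : Polynomial K) • B.map Polynomial.C +
        ((Polynomial.X : Polynomial K) ^ 2) • C.map Polynomial.C +
        ((Polynomial.X : Polynomial K) ^ 3) • D.map Polynomial.C) *
      ((Matrix.fromCols F (Matrix.fromCols G H)).map Polynomial.C -
        (Polynomial.X : Polynomial K) •
          (Matrix.fromCols E (Matrix.fromCols H G)).map Polynomial.C -
        ((Polynomial.X : Polynomial K) ^ 2) •
          (Matrix.fromCols H (Matrix.fromCols E F)).map Polynomial.C +
        ((Polynomial.X : Polynomial K) ^ 3) •
          (Matrix.fromCols G (Matrix.fromCols F E)).map Polynomial.C) = 0 ∧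
    (A.map Polynomial.C + (Polynomial.X : Polynomial K) • B.map Polynomial.C +
        ((Polynomial.X : Polynomial K) ^ 2) • C.map Polynomial.C +
        ((Polynomial.X : Polynomial K) ^ 3) • D.map Polynomial.C) *
      E.map Polynomial.C = 1 := by
  simp only [fromRows_mul_fromCols_eq_one_iff, mul_fromCols_eq_zero_iff,
    fromRows_mul_eq_zero_iff] at hUV
  obtain ⟨hAE, ⟨hAF, hAG, hAH⟩, ⟨hBE, hCE, hDE⟩, hBF, ⟨hBG, hBH⟩, ⟨hCF, hDF⟩,
    hCG, hCH, hDG, hDH⟩ := hUV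
  set Gz := A.map Polynomial.C + (X : K[X]) • B.map Polynomial.C +
    (X : K[X]) ^ 2 • C.map Polynomial.C + (X : K[X]) ^ 3 • D.map Polynomial.C
  have hGE : Gz * E.map Polynomial.C = 1 := by
    simp [Gz, cubic_map_C_mul_map_C, hAE, hBE, hCE, hDE]
  have hGF : Gz * F.map Polynomial.C = (X : K[X]) • 1 := by
    simp [Gz, cubic_map_C_mul_map_C, hAF, hBF, hCF, hDF]
  have hGG : Gz * G.map Polynomial.C = (X : K[X]) ^ 2 • 1 := by
    simp [Gz, cubic_map_C_mul_map_C, hAG, hBG, hCG, hDG]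
  have hGH : Gz * H.map Polynomial.C = (X : K[X]) ^ 3 • 1 := by
    simp [Gz, cubic_map_C_mul_map_C, hAH, hBH, hCH, hDH]
  refine ⟨?_, hGE⟩
  simp only [fromCols_map, smul_fromCols, fromCols_sub, fromCols_add, mul_fromCols,
    Matrix.mul_add, Matrix.mul_sub, Matrix.mul_smul, hGE, hGF, hGG, hGH, ← fromCols_zero]
  congr 2 <;> module

/-- Let `U = [A; B; C; D]` be an invertible `4n × 4n` matrix with each block of
size `n × 4n`, and `U⁻¹ = (E | F | G | H)` with each block of size `4n × n`.
Then over `K[z]` the memory-3 generator matrix `G(z) = A + Bz + Cz² + Dz³`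
satisfies `G(z) * K(z) = 0` for the `4n × 3n` control matrix
`K(z) = (F | G | H) - (E | H | G)z - (H | E | F)z² + (G | F | E)z³`,
and `G(z) * E = Iₙ`, so `G(z)` has a right polynomial inverse and the
convolutional `(4n, n)` code it generates is non-catastrophic. -/
theorem stmt_19 {K : Type*} [Field K] {n : ℕ}
    (A B C D : Matrix (Fin n) (Fin (4 * n)) K)
    (E F G H : Matrix (Fin (4 * n)) (Fin n) K)
    (hUV : Matrix.fromRows A (Matrix.fromRows B (Matrix.fromRows C D)) *
      Matrix.fromCols E (Matrix.fromCols F (Matrix.fromCols G H)) = 1)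
    (hVU : Matrix.fromCols E (Matrix.fromCols F (Matrix.fromCols G H)) *
      Matrix.fromRows A (Matrix.fromRows B (Matrix.fromRows C D)) = 1) :
    (A.map Polynomial.C + (Polynomial.X : Polynomial K) • B.map Polynomial.C +
        ((Polynomial.X : Polynomial K) ^ 2) • C.map Polynomial.C +
        ((Polynomial.X : Polynomial K) ^ 3) • D.map Polynomial.C) *
      ((Matrix.fromCols F (Matrix.fromCols G H)).map Polynomial.C -
        (Polynomial.X : Polynomial K) •
          (Matrix.fromCols E (Matrix.fromCols H G)).map Polynomial.C -
        ((Polynomial.X : Polynomial K) ^ 2) •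
          (Matrix.fromCols H (Matrix.fromCols E F)).map Polynomial.C +
        ((Polynomial.X : Polynomial K) ^ 3) •
          (Matrix.fromCols G (Matrix.fromCols F E)).map Polynomial.C) = 0 ∧
    (A.map Polynomial.C + (Polynomial.X : Polynomial K) • B.map Polynomial.C +
        ((Polynomial.X : Polynomial K) ^ 2) • C.map Polynomial.C +
        ((Polynomial.X : Polynomial K) ^ 3) • D.map Polynomial.C) *
      E.map Polynomial.C = 1 :=
  stmt_19_general A B C D E F G H hUV
end
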